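/- arXiv:1903.08605 — 2 statements merged into one kernel-verified Lean document; each statement's English description precedes it below -/
import Mathlib

section
/- Consider the L1-regularized linear state-estimation batch objective F(x) = (1/2)‖y − Hx‖²_{R⁻¹} + (1/2)‖Ψx − m‖²_{Q⁻¹} + λ‖Ωx‖₁ on ℝⁿ, with R, Q symmetric positive definite, Ψ invertible and λ ≥ 0, and its augmented Lagrangian L(x,w;η) = (1/2)‖y − Hx‖²_{R⁻¹} + (1/2)‖Ψx − m‖²_{Q⁻¹} + λ‖w‖₁ + ⟨η, w − Ωx⟩ + (ρ/2)‖w − Ωx‖² with ρ > 0. Let (x⁽ᵏ⁾, w⁽ᵏ⁾, η⁽ᵏ⁾) be any ADMM sequence, i.e. from any starting point (x⁽⁰⁾, w⁽⁰⁾, η⁽⁰⁾), for every k: x⁽ᵏ⁺¹⁾ globally minimizes x ↦ L(x, w⁽ᵏ⁾; η⁽ᵏ⁾), w⁽ᵏ⁺¹⁾ globally minimizes w ↦ L(x⁽ᵏ⁺¹⁾, w; η⁽ᵏ⁾), and η⁽ᵏ⁺¹⁾ = η⁽ᵏ⁾ + ρ(w⁽ᵏ⁺¹⁾ − Ωx⁽ᵏ⁺¹⁾).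 Then the sequence (x⁽ᵏ⁾, w⁽ᵏ⁾, η⁽ᵏ⁾) converges to a limit (x⋆, w⋆, η⋆) satisfying w⋆ = Ωx⋆, and x⋆ is the unique global minimizer of F. -/
open scoped RealInnerProductSpace
open Matrix Filter

/-- Multiplication of a vector in Euclidean space by a matrix. -/
noncomputable def mv {m n : ℕ} (M : Matrix (Fin m) (Fin n) ℝ)
    (v : EuclideanSpace ℝ (Fin n)) : EuclideanSpace ℝ (Fin m) :=
  Matrix.toEuclideanLin M v


/-- If `0 ≤ X + t*C` for all small positive `t`, then `0 ≤ X`. -/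
lemma ksadmm_nonneg_of {X C : ℝ} (h : ∀ t : ℝ, 0 < t → t ≤ 1 → 0 ≤ X + t * C) : 0 ≤ X := by
  by_contra hX
  push_neg at hX
  have hC1 : (0:ℝ) < |C| + 1 := by positivity
  set t := min 1 (-X / (2 * (|C| + 1))) with ht
  have ht0 : 0 < t := lt_min one_pos (div_pos (by linarith) (by positivity))
  have h1 := h t ht0 (min_le_left _ _)
  have htle : t ≤ -X / (2 * (|C| + 1)) := min_le_right _ _
  have h2 : t * C ≤ t * |C| := by
    have := le_abs_self C
    nlinarith
  have h3 : t * |C| ≤ (-X / (2 * (|C| + 1))) * |C| := by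
    have := abs_nonneg C
    nlinarith
  have h4 : (-X / (2 * (|C| + 1))) * |C| ≤ -X / 2 := by
    rw [div_mul_eq_mul_div, div_le_div_iff₀ (by positivity) (by norm_num)]
    nlinarith [abs_nonneg C]
  linarith

lemma ksadmm_div_nonneg {t y : ℝ} (ht : 0 < t) (h : 0 ≤ t * y) : 0 ≤ y := by
  by_contra hy
  push_neg at hy
  nlinarith

/-- positive-definiteness on the sphere gives a uniform strong-convexity constant -/
lemma ksadmm_exists_mu (n' : ℕ) (A : EuclideanSpace ℝ (Fin n') →ₗ[ℝ] EuclideanSpace ℝ (Fin n'))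
    (h : ∀ v : EuclideanSpace ℝ (Fin n'), v ≠ 0 → 0 < ⟪A v, v⟫) :
    ∃ μ : ℝ, 0 < μ ∧ ∀ v : EuclideanSpace ℝ (Fin n'), μ * ‖v‖ ^ 2 ≤ ⟪A v, v⟫ := by
  have hAc : Continuous A := A.continuous_of_finiteDimensional
  by_cases hs : (Metric.sphere (0 : EuclideanSpace ℝ (Fin n')) 1).Nonempty
  · have hcont : ContinuousOn (fun v : EuclideanSpace ℝ (Fin n') => ⟪A v, v⟫)
        (Metric.sphere 0 1) := ((hAc.inner continuous_id)).continuousOn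
    obtain ⟨v₀, hv₀s, hv₀min⟩ := (isCompact_sphere (0 : EuclideanSpace ℝ (Fin n')) 1).exists_isMinOn hs hcont
    have hv₀n : ‖v₀‖ = 1 := by simpa using hv₀s
    have hv₀ne : v₀ ≠ 0 := by
      intro h0; rw [h0] at hv₀n; simp at hv₀n
    refine ⟨⟪A v₀, v₀⟫, h v₀ hv₀ne, fun v => ?_⟩
    by_cases hv : v = 0
    · simp [hv]
    · have hvn : (0:ℝ) < ‖v‖ := norm_pos_iff.mpr hv
      have hu : (‖v‖⁻¹ • v) ∈ Metric.sphere (0 : EuclideanSpace ℝ (Fin n')) 1 := by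
        simp [norm_smul, abs_of_nonneg (le_of_lt hvn), inv_mul_cancel₀ hvn.ne']
      have := hv₀min hu
      simp only [Set.mem_setOf_eq] at this
      have hinner : ⟪A (‖v‖⁻¹ • v), ‖v‖⁻¹ • v⟫ = (‖v‖⁻¹)^2 * ⟪A v, v⟫ := by
        rw [_root_.map_smul, real_inner_smul_left, real_inner_smul_right]; ring
      rw [hinner] at this
      have h2 : ⟪A v₀, v₀⟫ * ‖v‖^2 ≤ (‖v‖⁻¹)^2 * ⟪A v, v⟫ * ‖v‖^2 := by
        nlinarith [sq_nonneg ‖v‖]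
      calc ⟪A v₀, v₀⟫ * ‖v‖^2 ≤ (‖v‖⁻¹)^2 * ⟪A v, v⟫ * ‖v‖^2 := h2
        _ = ⟪A v, v⟫ := by field_simp
  · refine ⟨1, one_pos, fun v => ?_⟩
    by_cases hv : v = 0
    · simp [hv]
    · exfalso; exact hs ⟨‖v‖⁻¹ • v, by
        have hvn : (0:ℝ) < ‖v‖ := norm_pos_iff.mpr hv
        simp [norm_smul, abs_of_nonneg (le_of_lt hvn), inv_mul_cancel₀ hvn.ne']⟩


lemma ksadmm_lyap_alg {W : Type*} [NormedAddCommGroup W] [InnerProductSpace ℝ W]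
    (ρ S : ℝ) (hρ : 0 < ρ) (hS : 0 ≤ S) (a r u b : W)
    (h1 : S ≤ ⟪a + ρ • (u + r), b - r⟫)
    (h2 : ⟪a + ρ • r, b⟫ ≤ 0) :
    ‖a + ρ • r‖ ^ 2 + ρ ^ 2 * ‖b‖ ^ 2 + ρ ^ 2 * ‖u + r‖ ^ 2 + ρ * S
      ≤ ‖a‖ ^ 2 + ρ ^ 2 * ‖u + b‖ ^ 2 := by
  have e1 : ‖a + ρ • r‖ ^ 2 = ‖a‖^2 + 2 * (ρ * ⟪a, r⟫) + ρ^2 * ‖r‖^2 := by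
    rw [norm_add_sq_real, norm_smul, real_inner_smul_right]
    simp [mul_pow, abs_of_pos hρ]; try ring
  have e2 : ‖u + r‖ ^ 2 = ‖u‖^2 + 2 * ⟪u, r⟫ + ‖r‖^2 := norm_add_sq_real u r
  have e3 : ‖u + b‖ ^ 2 = ‖u‖^2 + 2 * ⟪u, b⟫ + ‖b‖^2 := norm_add_sq_real u b
  have e4 : ⟪a + ρ • (u + r), b - r⟫
      = ⟪a, b⟫ - ⟪a, r⟫ + ρ * ⟪u, b⟫ - ρ * ⟪u, r⟫ + ρ * ⟪r, b⟫ - ρ * ‖r‖^2 := by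
    rw [inner_add_left, real_inner_smul_left, inner_add_left, inner_sub_right,
      inner_sub_right, inner_sub_right, real_inner_self_eq_norm_sq]
    ring
  have e5 : ⟪a + ρ • r, b⟫ = ⟪a, b⟫ + ρ * ⟪r, b⟫ := by
    rw [inner_add_left, real_inner_smul_left]
  rw [e4] at h1
  rw [e5] at h2
  nlinarith [h1, h2, hS, mul_pos hρ hρ]

lemma mv_mulVec {m n : ℕ} (M : Matrix (Fin m) (Fin n) ℝ) (v : EuclideanSpace ℝ (Fin n)) :
    mv M v = M.mulVec v := by
  rw [mv, Matrix.toEuclideanLin_apply]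

lemma mv_add {m n : ℕ} (M : Matrix (Fin m) (Fin n) ℝ) (u v : EuclideanSpace ℝ (Fin n)) :
    mv M (u + v) = mv M u + mv M v := _root_.map_add _ _ _

lemma mv_sub {m n : ℕ} (M : Matrix (Fin m) (Fin n) ℝ) (u v : EuclideanSpace ℝ (Fin n)) :
    mv M (u - v) = mv M u - mv M v := _root_.map_sub _ _ _

lemma mv_mul {a b c : ℕ} (M : Matrix (Fin a) (Fin b) ℝ) (N : Matrix (Fin b) (Fin c) ℝ)
    (v : EuclideanSpace ℝ (Fin c)) : mv (M * N) v = mv M (mv N v) := by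
  apply WithLp.ofLp_injective
  rw [mv_mulVec, mv_mulVec, mv_mulVec]
  exact (Matrix.mulVec_mulVec (WithLp.ofLp v) M N).symm

lemma mv_one {n : ℕ} (v : EuclideanSpace ℝ (Fin n)) : mv (1 : Matrix (Fin n) (Fin n) ℝ) v = v := by
  apply WithLp.ofLp_injective
  rw [mv_mulVec]
  exact Matrix.one_mulVec _

lemma mv_adjoint {a b : ℕ} (M : Matrix (Fin a) (Fin b) ℝ)
    (u : EuclideanSpace ℝ (Fin b)) (v : EuclideanSpace ℝ (Fin a)) :
    ⟪mv M u, v⟫ = ⟪u, mv Mᵀ v⟫ := by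
  have h1 : mv Mᵀ v = LinearMap.adjoint (Matrix.toEuclideanLin M) v := by
    rw [mv, ← Matrix.conjTranspose_eq_transpose_of_trivial,
      Matrix.toEuclideanLin_conjTranspose_eq_adjoint]
  rw [h1, mv]
  exact (LinearMap.adjoint_inner_right _ _ _).symm

lemma mv_inner_pos {n : ℕ} {P : Matrix (Fin n) (Fin n) ℝ} (hP : P.PosDef)
    (v : EuclideanSpace ℝ (Fin n)) (hv : v ≠ 0) : 0 < ⟪mv P v, v⟫ := by
  have h1 : ⟪mv P v, v⟫ = dotProduct (star (WithLp.ofLp v)) (P.mulVec (WithLp.ofLp v)) := by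
    rw [mv, Matrix.toEuclideanLin_apply]
    simp [PiLp.inner_apply, dotProduct, mul_comm]
  rw [h1]
  have hv' : (WithLp.ofLp v) ≠ 0 := by
    intro h0
    apply hv
    simpa using h0
  have := hP.dotProduct_mulVec_pos hv'
  simpa using this

lemma mv_inner_nonneg {n : ℕ} {P : Matrix (Fin n) (Fin n) ℝ} (hP : P.PosDef)
    (v : EuclideanSpace ℝ (Fin n)) : 0 ≤ ⟪mv P v, v⟫ := by
  by_cases hv : v = 0
  · simp [hv]
  · exact (mv_inner_pos hP v hv).le

lemma ksadmm_inner_flip {p n : ℕ} (P : Matrix (Fin p) (Fin p) ℝ)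
    (M : Matrix (Fin p) (Fin n) ℝ) (c : EuclideanSpace ℝ (Fin p))
    (z : EuclideanSpace ℝ (Fin n)) :
    ⟪mv P (c - mv M z), c - mv M z⟫ = ⟪mv P (mv M z - c), mv M z - c⟫ := by
  have e : c - mv M z = -(mv M z - c) := by abel
  rw [e, show mv P (-(mv M z - c)) = -(mv P (mv M z - c)) from _root_.map_neg _ _, inner_neg_neg]

lemma ksadmm_quad_expand {p n : ℕ} (P : Matrix (Fin p) (Fin p) ℝ) (hP : Pᵀ = P)
    (M : Matrix (Fin p) (Fin n) ℝ) (c : EuclideanSpace ℝ (Fin p))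
    (x d : EuclideanSpace ℝ (Fin n)) :
    ⟪mv P (mv M (x + d) - c), mv M (x + d) - c⟫
      = ⟪mv P (mv M x - c), mv M x - c⟫ + 2 * ⟪mv Mᵀ (mv P (mv M x - c)), d⟫
        + ⟪mv ((Mᵀ * P) * M) d, d⟫ := by
  have e0 : mv M (x + d) - c = (mv M x - c) + mv M d := by rw [mv_add]; abel
  rw [e0, mv_add, inner_add_left, inner_add_right, inner_add_right]
  have h1 : ⟪mv P (mv M x - c), mv M d⟫ = ⟪mv Mᵀ (mv P (mv M x - c)), d⟫ := by
    rw [real_inner_comm, mv_adjoint M d (mv P (mv M x - c)), real_inner_comm]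
  have h2 : ⟪mv P (mv M d), mv M x - c⟫ = ⟪mv Mᵀ (mv P (mv M x - c)), d⟫ := by
    rw [mv_adjoint P (mv M d) (mv M x - c), hP,
      mv_adjoint M d (mv P (mv M x - c)), real_inner_comm]
  have h3 : ⟪mv P (mv M d), mv M d⟫ = ⟪mv ((Mᵀ * P) * M) d, d⟫ := by
    rw [mv_mul, mv_mul, mv_adjoint Mᵀ (mv P (mv M d)) d, Matrix.transpose_transpose,
      real_inner_comm]
  rw [h1, h2, h3]
  ring

lemma ksadmm_grad_expand {p n : ℕ} (P : Matrix (Fin p) (Fin p) ℝ)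
    (M : Matrix (Fin p) (Fin n) ℝ) (c : EuclideanSpace ℝ (Fin p))
    (x d : EuclideanSpace ℝ (Fin n)) :
    mv Mᵀ (mv P (mv M (x + d) - c))
      = mv Mᵀ (mv P (mv M x - c)) + mv ((Mᵀ * P) * M) d := by
  have e0 : mv M (x + d) - c = (mv M x - c) + mv M d := by rw [mv_add]; abel
  rw [e0, mv_add, mv_add, mv_mul, mv_mul]

set_option maxHeartbeats 2000000 in
theorem ksadmm_core (n' m' : ℕ)
    (f : EuclideanSpace ℝ (Fin n') → ℝ)
    (gf : EuclideanSpace ℝ (Fin n') → EuclideanSpace ℝ (Fin n'))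
    (A : EuclideanSpace ℝ (Fin n') →ₗ[ℝ] EuclideanSpace ℝ (Fin n'))
    (μ : ℝ) (hμ : 0 < μ)
    (hA : ∀ v, μ * ‖v‖ ^ 2 ≤ ⟪A v, v⟫)
    (hf : ∀ x d, f (x + d) = f x + ⟪gf x, d⟫ + 1 / 2 * ⟪A d, d⟫)
    (hgf : ∀ x d, gf (x + d) = gf x + A d)
    (L : EuclideanSpace ℝ (Fin n') →ₗ[ℝ] EuclideanSpace ℝ (Fin m'))
    (Lt : EuclideanSpace ℝ (Fin m') →ₗ[ℝ] EuclideanSpace ℝ (Fin n'))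
    (hL : ∀ u v, ⟪L u, v⟫ = ⟪u, Lt v⟫)
    (lam : ℝ) (hlam : 0 ≤ lam)
    (g : EuclideanSpace ℝ (Fin m') → ℝ)
    (hg : ∀ v, g v = lam * ∑ j, |v j|)
    (ρ : ℝ) (hρ : 0 < ρ)
    (Lag : EuclideanSpace ℝ (Fin n') → EuclideanSpace ℝ (Fin m') → EuclideanSpace ℝ (Fin m') → ℝ)
    (hLag : ∀ x w η, Lag x w η = f x + g w + ⟪η, w - L x⟫ + ρ / 2 * ‖w - L x‖ ^ 2)
    (x : ℕ → EuclideanSpace ℝ (Fin n'))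
    (w η : ℕ → EuclideanSpace ℝ (Fin m'))
    (hx : ∀ k z, Lag (x (k + 1)) (w k) (η k) ≤ Lag z (w k) (η k))
    (hw : ∀ k v, Lag (x (k + 1)) (w (k + 1)) (η k) ≤ Lag (x (k + 1)) v (η k))
    (hη : ∀ k, η (k + 1) = η k + ρ • (w (k + 1) - L (x (k + 1)))) :
    ∃ xs ws ηs, Tendsto x atTop (nhds xs) ∧ Tendsto w atTop (nhds ws) ∧
      Tendsto η atTop (nhds ηs) ∧ ws = L xs ∧
      ∀ z, f xs + g (L xs) + μ / 2 * ‖z - xs‖ ^ 2 ≤ f z + g (L z) := by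
  -- continuity facts
  have hLc : Continuous L := L.continuous_of_finiteDimensional
  have hLtc : Continuous Lt := Lt.continuous_of_finiteDimensional
  have hAc : Continuous A := A.continuous_of_finiteDimensional
  have hgf0 : ∀ v, gf v = gf 0 + A v := fun v => by simpa using hgf 0 v
  have hgfc : Continuous gf := by
    have : gf = fun v => gf 0 + A v := funext hgf0
    rw [this]; exact continuous_const.add hAc
  have hgc : Continuous g := by
    have : g = fun v => lam * ∑ j, |v j| := funext hg
    rw [this]
    exact continuous_const.mul (continuous_finset_sum _ fun j _ =>
      (EuclideanSpace.proj j).continuous.abs)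
  have hL' : ∀ (q : EuclideanSpace ℝ (Fin m')) (d : EuclideanSpace ℝ (Fin n')),
      ⟪Lt q, d⟫ = ⟪q, L d⟫ := fun q d => by
    rw [real_inner_comm, ← hL, real_inner_comm]
  -- quadratic expansion of the Lagrangian in x
  have lagx : ∀ xx ww ηη (d : EuclideanSpace ℝ (Fin n')), Lag (xx + d) ww ηη
      = Lag xx ww ηη + ⟪gf xx - Lt ηη - ρ • Lt (ww - L xx), d⟫
        + (1 / 2 * ⟪A d, d⟫ + ρ / 2 * ‖L d‖ ^ 2) := by
    intro xx ww ηη d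
    have e1 : ww - L (xx + d) = (ww - L xx) - L d := by rw [_root_.map_add]; abel
    rw [hLag, hLag, hf, e1, norm_sub_sq_real, inner_sub_right (𝕜 := ℝ)]
    have e2 : ⟪ηη, L d⟫ = ⟪Lt ηη, d⟫ := by rw [hL', real_inner_comm]
    have e3 : ⟪ww - L xx, L d⟫ = ⟪Lt (ww - L xx), d⟫ := by rw [hL', real_inner_comm]
    have e4 : ⟪gf xx - Lt ηη - ρ • Lt (ww - L xx), d⟫
        = ⟪gf xx, d⟫ - ⟪Lt ηη, d⟫ - ρ * ⟪Lt (ww - L xx), d⟫ := by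
      rw [inner_sub_left, inner_sub_left, real_inner_smul_left]
    rw [e2] at *
    rw [e3, e4]
    ring
  -- x-step gradient equation
  have XE : ∀ k, gf (x (k + 1)) = Lt (η k) + ρ • Lt (w k - L (x (k + 1))) := by
    intro k
    set G := gf (x (k + 1)) - Lt (η k) - ρ • Lt (w k - L (x (k + 1))) with hG
    have key : ∀ d, 0 ≤ ⟪G, d⟫ + (1 / 2 * ⟪A d, d⟫ + ρ / 2 * ‖L d‖ ^ 2) := by
      intro d
      have := hx k (x (k + 1) + d)
      rw [lagx] at this
      linarith
    have hGz : G = 0 := by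
      by_contra hGne
      have hGn : 0 < ‖G‖ ^ 2 := pow_pos (norm_pos_iff.mpr hGne) 2
      have h0 : 0 ≤ -‖G‖ ^ 2 := by
        apply ksadmm_nonneg_of (C := 1 / 2 * ⟪A G, G⟫ + ρ / 2 * ‖L G‖ ^ 2)
        intro t ht ht1
        have := key (t • (-G))
        have e1 : ⟪G, t • (-G)⟫ = -(t * ‖G‖ ^ 2) := by
          rw [real_inner_smul_right, inner_neg_right, real_inner_self_eq_norm_sq]; ring
        have e2 : ⟪A (t • (-G)), t • (-G)⟫ = t ^ 2 * ⟪A G, G⟫ := by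
          rw [_root_.map_smul, _root_.map_neg, real_inner_smul_left, real_inner_smul_right,
            inner_neg_left, inner_neg_right]
          ring
        have e3 : ‖L (t • (-G))‖ ^ 2 = t ^ 2 * ‖L G‖ ^ 2 := by
          rw [_root_.map_smul, _root_.map_neg, norm_smul, norm_neg]
          simp [mul_pow, abs_of_pos ht]
        rw [e1, e2, e3] at this
        have h4 : 0 ≤ t * (-‖G‖ ^ 2 + t * (1 / 2 * ⟪A G, G⟫ + ρ / 2 * ‖L G‖ ^ 2)) := by
          nlinarith
        have := ksadmm_div_nonneg ht h4
        nlinarith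
      linarith
    have h5 : gf (x (k + 1)) - (Lt (η k) + ρ • Lt (w k - L (x (k + 1)))) = 0 := by
      rw [sub_add_eq_sub_sub]; exact hGz
    exact sub_eq_zero.mp h5
  
  -- convexity of g along segments
  have gconv : ∀ (a b : EuclideanSpace ℝ (Fin m')) (t : ℝ), 0 ≤ t → t ≤ 1 →
      g (a + t • (b - a)) ≤ g a + t * (g b - g a) := by
    intro a b t ht0 ht1
    rw [hg, hg, hg]
    have key : ∀ j, |(a + t • (b - a)) j| ≤ (1 - t) * |a j| + t * |b j| := by
      intro j
      have e : (a + t • (b - a)) j = (1 - t) * a j + t * b j := by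
        show a j + t * (b j - a j) = _; ring
      rw [e]
      calc |(1 - t) * a j + t * b j| ≤ |(1 - t) * a j| + |t * b j| := abs_add_le _ _
        _ = (1 - t) * |a j| + t * |b j| := by
            rw [abs_mul, abs_mul, abs_of_nonneg (by linarith : (0:ℝ) ≤ 1 - t),
              abs_of_nonneg ht0]
    have hsum : ∑ j, |(a + t • (b - a)) j| ≤ ∑ j, ((1 - t) * |a j| + t * |b j|) :=
      Finset.sum_le_sum fun j _ => key j
    have e2 : ∑ j, ((1 - t) * |a j| + t * |b j|)
        = (1 - t) * ∑ j, |a j| + t * ∑ j, |b j| := by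
      rw [Finset.sum_add_distrib, Finset.mul_sum, Finset.mul_sum]
    rw [e2] at hsum
    nlinarith [mul_le_mul_of_nonneg_left hsum hlam]
  -- w-step subgradient inequality
  have WE : ∀ k v, g (w (k + 1)) + ⟪η (k + 1), w (k + 1)⟫ ≤ g v + ⟪η (k + 1), v⟫ := by
    intro k v
    set a := L (x (k + 1)) with ha
    set wP := w (k + 1) with hwP
    have key : 0 ≤ g v - g wP + ⟪η k + ρ • (wP - a), v - wP⟫ := by
      apply ksadmm_nonneg_of (C := ρ / 2 * ‖v - wP‖ ^ 2)
      intro t ht0 ht1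
      have h1 := hw k (wP + t • (v - wP))
      rw [hLag, hLag] at h1
      have h2 := gconv wP v t (le_of_lt ht0) ht1
      have eab : wP + t • (v - wP) - a = (wP - a) + t • (v - wP) := by abel
      have e1 : ⟪η k, wP + t • (v - wP) - a⟫ = ⟪η k, wP - a⟫ + t * ⟪η k, v - wP⟫ := by
        rw [eab, inner_add_right, real_inner_smul_right]
      have e2 : ‖wP + t • (v - wP) - a‖ ^ 2
          = ‖wP - a‖ ^ 2 + 2 * (t * ⟪wP - a, v - wP⟫) + t ^ 2 * ‖v - wP‖ ^ 2 := by
        rw [eab, norm_add_sq_real, real_inner_smul_right, norm_smul]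
        simp [mul_pow, abs_of_pos ht0]
      rw [e1, e2] at h1
      have e3 : ⟪η k + ρ • (wP - a), v - wP⟫ = ⟪η k, v - wP⟫ + ρ * ⟪wP - a, v - wP⟫ := by
        rw [inner_add_left, real_inner_smul_left]
      rw [e3]
      have h4 : 0 ≤ t * ((g v - g wP + (⟪η k, v - wP⟫ + ρ * ⟪wP - a, v - wP⟫))
          + t * (ρ / 2 * ‖v - wP‖ ^ 2)) := by nlinarith
      exact ksadmm_div_nonneg ht0 h4
    have e5 : η k + ρ • (wP - a) = η (k + 1) := (hη k).symm
    rw [e5, inner_sub_right] at key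
    linarith
  -- A is bijective
  have hAinj : Function.Injective A := by
    intro u v huv
    by_contra hne
    have hne' : u - v ≠ 0 := sub_ne_zero.mpr hne
    have h0 : A (u - v) = 0 := by rw [_root_.map_sub, huv, sub_self]
    have h1 := hA (u - v)
    rw [h0] at h1
    simp only [inner_zero_left] at h1
    have h2 : 0 < ‖u - v‖ ^ 2 := pow_pos (norm_pos_iff.mpr hne') 2
    nlinarith
  have hAsurj : Function.Surjective A := (LinearMap.injective_iff_surjective).mp hAinj
  set Aeq := LinearEquiv.ofBijective A ⟨hAinj, hAsurj⟩ with hAeq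
  set xh : EuclideanSpace ℝ (Fin m') → EuclideanSpace ℝ (Fin n') :=
    fun q => Aeq.symm (Lt q - gf 0) with hxh
  have hxhA : ∀ q, A (xh q) = Lt q - gf 0 := fun q => Aeq.apply_symm_apply _
  have hgfxh : ∀ q, gf (xh q) = Lt q := by
    intro q
    rw [hgf0, hxhA]; abel
  have hxhadd : ∀ q u, xh (q + u) = xh q + Aeq.symm (Lt u) := by
    intro q u
    have e : Lt (q + u) - gf 0 = (Lt q - gf 0) + Lt u := by rw [_root_.map_add]; abel
    show Aeq.symm (Lt (q + u) - gf 0) = Aeq.symm (Lt q - gf 0) + Aeq.symm (Lt u)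
    rw [e, _root_.map_add]
  have hxhc : Continuous xh :=
    (Aeq.symm.toLinearMap.continuous_of_finiteDimensional).comp (hLtc.sub continuous_const)
  -- the dual function on the box
  set ψ : EuclideanSpace ℝ (Fin m') → ℝ := fun q => f (xh q) - ⟪q, L (xh q)⟫ with hψ
  have hfc : Continuous f := by
    have hfform : f = fun v => f 0 + ⟪gf 0, v⟫ + 1 / 2 * ⟪A v, v⟫ :=
      funext fun v => by simpa using hf 0 v
    rw [hfform]
    exact (continuous_const.add (continuous_const.inner continuous_id)).add
      (continuous_const.mul (hAc.inner continuous_id))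
  have hψc : Continuous ψ := (hfc.comp hxhc).sub (continuous_id.inner (hLc.comp hxhc))
  set B : Set (EuclideanSpace ℝ (Fin m')) := {q | ∀ j, |q j| ≤ lam} with hB
  have hB0 : (0 : EuclideanSpace ℝ (Fin m')) ∈ B := fun j => by
    show |(0:ℝ)| ≤ lam; simpa using hlam
  have hBclosed : IsClosed B := by
    have : B = ⋂ j, {q : EuclideanSpace ℝ (Fin m') | |q j| ≤ lam} := by
      ext q; simp [hB, Set.mem_iInter]
    rw [this]
    exact isClosed_iInter fun j =>
      isClosed_le ((EuclideanSpace.proj j).continuous.abs) continuous_const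
  have hBbdd : Bornology.IsBounded B := by
    apply (Metric.isBounded_closedBall
      (x := (0 : EuclideanSpace ℝ (Fin m'))) (r := Real.sqrt (m' * lam ^ 2))).subset
    intro q hq
    rw [Metric.mem_closedBall, dist_zero_right, EuclideanSpace.norm_eq]
    apply Real.sqrt_le_sqrt
    calc ∑ i, ‖q i‖ ^ 2 ≤ ∑ _i : Fin m', lam ^ 2 := Finset.sum_le_sum (fun i _ => by
          have h1 := hq i
          rw [Real.norm_eq_abs]
          nlinarith [abs_nonneg (q i)])
      _ = m' * lam ^ 2 := by simp [Finset.sum_const]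
  have hBcpt : IsCompact B := Metric.isCompact_of_isClosed_isBounded hBclosed hBbdd
  obtain ⟨ηstar, hηstarB, hmax⟩ := hBcpt.exists_isMaxOn ⟨0, hB0⟩ hψc.continuousOn
  -- key identity for ψ
  have ψid : ∀ q u, ψ (q + u)
      = ψ q - ⟪u, L (xh q)⟫ - 1 / 2 * ⟪A (Aeq.symm (Lt u)), Aeq.symm (Lt u)⟫ := by
    intro q u
    set d := Aeq.symm (Lt u) with hd
    have hAd : A d = Lt u := Aeq.apply_symm_apply _
    have h1 : ψ (q + u) = f (xh q + d) - ⟪q + u, L (xh q) + L d⟫ := by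
      show f (xh (q + u)) - ⟪q + u, L (xh (q + u))⟫ = _
      rw [hxhadd, _root_.map_add]
    rw [h1, hf]
    have e1 : ⟪gf (xh q), d⟫ = ⟪q, L d⟫ := by rw [hgfxh]; exact hL' q d
    have e2 : ⟪q + u, L (xh q) + L d⟫
        = ⟪q, L (xh q)⟫ + ⟪q, L d⟫ + (⟪u, L (xh q)⟫ + ⟪u, L d⟫) := by
      rw [inner_add_left, inner_add_right, inner_add_right]
    have e3 : ⟪u, L d⟫ = ⟪A d, d⟫ := by
      rw [show ⟪u, L d⟫ = ⟪d, Lt u⟫ from (real_inner_comm _ _).trans (hL d u), ← hAd]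
      exact real_inner_comm _ _
    rw [e1, e2, e3]
    show f (xh q) + ⟪q, L d⟫ + 1 / 2 * ⟪A d, d⟫ - _ = f (xh q) - ⟪q, L (xh q)⟫ - _ - _
    ring
  set xstar := xh ηstar with hxstar
  set wstar := L xstar with hwstar
  have hS1 : gf xstar = Lt ηstar := hgfxh ηstar
  -- first-order condition on the box
  have hbox : ∀ q ∈ B, 0 ≤ ⟪q - ηstar, wstar⟫ := by
    intro q hq
    apply ksadmm_nonneg_of
      (C := 1 / 2 * ⟪A (Aeq.symm (Lt (q - ηstar))), Aeq.symm (Lt (q - ηstar))⟫)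
    intro t ht0 ht1
    have hmem : ηstar + t • (q - ηstar) ∈ B := by
      intro j
      have e : (ηstar + t • (q - ηstar)) j = (1 - t) * ηstar j + t * q j := by
        show ηstar j + t * (q j - ηstar j) = _; ring
      rw [e]
      have h1 : |ηstar j| ≤ lam := hηstarB j
      have h2 : |q j| ≤ lam := hq j
      calc |(1 - t) * ηstar j + t * q j| ≤ |(1 - t) * ηstar j| + |t * q j| := abs_add_le _ _
        _ = (1 - t) * |ηstar j| + t * |q j| := by
            rw [abs_mul, abs_mul, abs_of_nonneg (by linarith : (0:ℝ) ≤ 1 - t),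
              abs_of_nonneg (le_of_lt ht0)]
        _ ≤ lam := by nlinarith
    have hle : ψ (ηstar + t • (q - ηstar)) ≤ ψ ηstar := hmax hmem
    rw [ψid ηstar (t • (q - ηstar))] at hle
    have e1 : ⟪t • (q - ηstar), L (xh ηstar)⟫ = t * ⟪q - ηstar, wstar⟫ := by
      rw [real_inner_smul_left, hwstar, hxstar]
    have e2 : Aeq.symm (Lt (t • (q - ηstar))) = t • Aeq.symm (Lt (q - ηstar)) := by
      rw [_root_.map_smul, _root_.map_smul]
    rw [e1, e2] at hle
    have e3 : ⟪A (t • Aeq.symm (Lt (q - ηstar))), t • Aeq.symm (Lt (q - ηstar))⟫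
        = t ^ 2 * ⟪A (Aeq.symm (Lt (q - ηstar))), Aeq.symm (Lt (q - ηstar))⟫ := by
      rw [_root_.map_smul, real_inner_smul_left, real_inner_smul_right]; ring
    rw [e3] at hle
    have hle' : ψ ηstar - t * ⟪q - ηstar, wstar⟫
        - 1 / 2 * (t ^ 2 * ⟪A (Aeq.symm (Lt (q - ηstar))), Aeq.symm (Lt (q - ηstar))⟫)
        ≤ ψ ηstar := hle
    have h4 : 0 ≤ t * (⟪q - ηstar, wstar⟫
        + t * (1 / 2 * ⟪A (Aeq.symm (Lt (q - ηstar))), Aeq.symm (Lt (q - ηstar))⟫)) := by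
      nlinarith
    exact ksadmm_div_nonneg ht0 h4
  -- coordinatewise complementarity
  have hcoord : ∀ j, lam * |wstar j| + ηstar j * wstar j ≤ 0 := by
    intro j
    have mk : ∀ c : ℝ, |c| ≤ lam → (c - ηstar j) * wstar j ≥ 0 := by
      intro c hc
      have hqB : (ηstar + EuclideanSpace.single j (c - ηstar j)) ∈ B := by
        intro i
        by_cases hij : i = j
        · subst hij
          have e : (ηstar + EuclideanSpace.single i (c - ηstar i)) i = c := by
            show ηstar i + (EuclideanSpace.single i (c - ηstar i)) i = c
            rw [EuclideanSpace.single_apply]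
            simp
          rw [e]; exact hc
        · have e : (ηstar + EuclideanSpace.single j (c - ηstar j)) i = ηstar i := by
            show ηstar i + (EuclideanSpace.single j (c - ηstar j)) i = ηstar i
            rw [EuclideanSpace.single_apply]
            simp [hij]
          rw [e]; exact hηstarB i
      have h1 := hbox _ hqB
      have e1 : (ηstar + EuclideanSpace.single j (c - ηstar j)) - ηstar
          = EuclideanSpace.single j (c - ηstar j) := by abel
      rw [e1, EuclideanSpace.inner_single_left] at h1
      simpa using h1
    rcases le_or_gt 0 (wstar j) with hs | hs
    · have h1 := mk (-lam) (by rw [abs_neg, abs_of_nonneg hlam])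
      rw [abs_of_nonneg hs]
      nlinarith
    · have h1 := mk lam (by rw [abs_of_nonneg hlam])
      rw [abs_of_neg hs]
      nlinarith
  -- subgradient inequality for the saddle multiplier
  have hS2 : ∀ v, g wstar + ⟪ηstar, wstar⟫ ≤ g v + ⟪ηstar, v⟫ := by
    intro v
    have hinner : ∀ (u : EuclideanSpace ℝ (Fin m')), ⟪ηstar, u⟫ = ∑ j, ηstar j * u j := by
      intro u
      rw [PiLp.inner_apply]
      simp only [Real.inner_apply]
    rw [hg, hg, hinner, hinner]
    have A1 : lam * ∑ j, |wstar j| + ∑ j, ηstar j * wstar j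
        = ∑ j, (lam * |wstar j| + ηstar j * wstar j) := by
      rw [Finset.mul_sum, ← Finset.sum_add_distrib]
    have A2 : lam * ∑ j, |v j| + ∑ j, ηstar j * v j
        = ∑ j, (lam * |v j| + ηstar j * v j) := by
      rw [Finset.mul_sum, ← Finset.sum_add_distrib]
    rw [A1, A2]
    have h1 : ∑ j, (lam * |wstar j| + ηstar j * wstar j) ≤ 0 :=
      Finset.sum_nonpos fun j _ => hcoord j
    have h2 : (0:ℝ) ≤ ∑ j, (lam * |v j| + ηstar j * v j) := by
      apply Finset.sum_nonneg
      intro j _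
      have hb : |ηstar j| ≤ lam := hηstarB j
      have h3 : |ηstar j * v j| ≤ lam * |v j| := by
        rw [abs_mul]; nlinarith [abs_nonneg (v j)]
      nlinarith [neg_abs_le (ηstar j * v j)]
    linarith
  -- optimality of xstar
  have hopt : ∀ z, f xstar + g (L xstar) + μ / 2 * ‖z - xstar‖ ^ 2 ≤ f z + g (L z) := by
    intro z
    have e1 : f z = f xstar + ⟪gf xstar, z - xstar⟫ + 1 / 2 * ⟪A (z - xstar), z - xstar⟫ := by
      conv_lhs => rw [show z = xstar + (z - xstar) by abel]
      rw [hf]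
    have e2 : ⟪gf xstar, z - xstar⟫ = ⟪ηstar, L z⟫ - ⟪ηstar, wstar⟫ := by
      rw [hS1, hL', _root_.map_sub, inner_sub_right]
    have h3 := hS2 (L z)
    have h4 := hA (z - xstar)
    rw [e2] at e1
    rw [← hwstar]
    nlinarith [sq_nonneg ‖z - xstar‖]
  
  -- Lyapunov decrease for any multiplier satisfying the saddle conditions
  set V : EuclideanSpace ℝ (Fin m') → ℕ → ℝ :=
    fun ηh k => ‖η k - ηh‖ ^ 2 + ρ ^ 2 * ‖w k - wstar‖ ^ 2 with hV
  have lyap : ∀ ηh, gf xstar = Lt ηh →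
      (∀ v, g wstar + ⟪ηh, wstar⟫ ≤ g v + ⟪ηh, v⟫) →
      ∀ k, V ηh (k + 1) + ρ ^ 2 * ‖w k - L (x (k + 1))‖ ^ 2
        + ρ * (μ * ‖x (k + 1) - xstar‖ ^ 2) ≤ V ηh k := by
    intro ηh hS1h hS2h k
    have hur : (w k - w (k + 1)) + (w (k + 1) - L (x (k + 1))) = w k - L (x (k + 1)) := by
      abel
    have hΔ : gf (x (k + 1)) = gf xstar + A (x (k + 1) - xstar) := by
      have h0 := hgf xstar (x (k + 1) - xstar)
      rwa [show xstar + (x (k + 1) - xstar) = x (k + 1) by abel] at h0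
    have hE0 : Lt (η k) + ρ • Lt (w k - L (x (k + 1))) = Lt ηh + A (x (k + 1) - xstar) := by
      rw [← XE k, ← hS1h]; exact hΔ
    have hE1 : A (x (k + 1) - xstar)
        = Lt ((η k - ηh) + ρ • ((w k - w (k + 1)) + (w (k + 1) - L (x (k + 1))))) := by
      have h' : A (x (k + 1) - xstar)
          = (Lt (η k) + ρ • Lt (w k - L (x (k + 1)))) - Lt ηh := by
        rw [hE0]; abel
      rw [h', hur]
      simp only [_root_.map_add, _root_.map_sub, _root_.map_smul]
      abel
    have hstar1 : μ * ‖x (k + 1) - xstar‖ ^ 2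
        ≤ ⟪(η k - ηh) + ρ • ((w k - w (k + 1)) + (w (k + 1) - L (x (k + 1)))),
            (w (k + 1) - wstar) - (w (k + 1) - L (x (k + 1)))⟫ := by
      have h1 := hA (x (k + 1) - xstar)
      have e1 : ⟪A (x (k + 1) - xstar), x (k + 1) - xstar⟫
          = ⟪(η k - ηh) + ρ • ((w k - w (k + 1)) + (w (k + 1) - L (x (k + 1)))),
              L (x (k + 1) - xstar)⟫ := by
        rw [hE1, hL']
      have e2 : L (x (k + 1) - xstar)
          = (w (k + 1) - wstar) - (w (k + 1) - L (x (k + 1))) := by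
        rw [_root_.map_sub, hwstar]; abel
      rw [e2] at e1
      linarith [h1, e1.le, e1.ge]
    have hstar2 : ⟪(η k - ηh) + ρ • (w (k + 1) - L (x (k + 1))), w (k + 1) - wstar⟫ ≤ 0 := by
      have h1 := WE k wstar
      have h2 := hS2h (w (k + 1))
      have e2 : ⟪(η k - ηh) + ρ • (w (k + 1) - L (x (k + 1))), w (k + 1) - wstar⟫
          = (⟪η (k + 1), w (k + 1)⟫ - ⟪η (k + 1), wstar⟫)
            - (⟪ηh, w (k + 1)⟫ - ⟪ηh, wstar⟫) := by
        rw [hη k]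
        simp only [inner_add_left, inner_sub_left, inner_sub_right]
        ring
      rw [e2]
      have h1' : ⟪η (k + 1), w (k + 1)⟫ - ⟪η (k + 1), wstar⟫
          ≤ g wstar - g (w (k + 1)) := by linarith
      linarith
    have halg := ksadmm_lyap_alg ρ (μ * ‖x (k + 1) - xstar‖ ^ 2) hρ
      (by positivity) (η k - ηh) (w (k + 1) - L (x (k + 1)))
      (w k - w (k + 1)) (w (k + 1) - wstar) hstar1 hstar2
    have p1 : (η k - ηh) + ρ • (w (k + 1) - L (x (k + 1))) = η (k + 1) - ηh := by
      rw [hη k]; abel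
    have p3 : (w k - w (k + 1)) + (w (k + 1) - wstar) = w k - wstar := by abel
    rw [p1, hur, p3] at halg
    simp only [hV]
    linarith
  have hVnonneg : ∀ ηh k, 0 ≤ V ηh k := by
    intro ηh k; simp only [hV]; positivity
  have lyapstar := lyap ηstar hS1 hS2
  set ee : ℕ → ℝ := fun k => ρ ^ 2 * ‖w k - L (x (k + 1))‖ ^ 2
      + ρ * (μ * ‖x (k + 1) - xstar‖ ^ 2) with hee
  have hestep : ∀ k, V ηstar (k + 1) + ee k ≤ V ηstar k := by
    intro k; have := lyapstar k; simp only [hee]; linarith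
  have henonneg : ∀ k, 0 ≤ ee k := by intro k; simp only [hee]; positivity
  have hpartial : ∀ K, ∑ k ∈ Finset.range K, ee k ≤ V ηstar 0 - V ηstar K := by
    intro K
    induction K with
    | zero => simp
    | succ K ih =>
      rw [Finset.sum_range_succ]
      have := hestep K
      linarith
  have hsummable : Summable ee := summable_of_sum_range_le (c := V ηstar 0) henonneg
    (fun K => by have h1 := hpartial K; have h2 := hVnonneg ηstar K; linarith)
  have he0 : Tendsto ee atTop (nhds 0) := hsummable.tendsto_atTop_zero
  have haux : ∀ c : ℝ, Tendsto (fun k => c * ee k) atTop (nhds 0) := by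
    intro c
    simpa using he0.const_mul c
  have hρ2 : (0:ℝ) < ρ ^ 2 := by positivity
  have hρμ : (0:ℝ) < ρ * μ := mul_pos hρ hμ
  -- the two ingredients tend to zero
  have hsq1 : Tendsto (fun k => ‖w k - L (x (k + 1))‖ ^ 2) atTop (nhds 0) := by
    apply squeeze_zero (fun k => by positivity) (fun k => ?_) (haux (1 / ρ ^ 2))
    simp only [hee]
    have h1 : (0:ℝ) ≤ ρ * (μ * ‖x (k + 1) - xstar‖ ^ 2) := by positivity
    have h3 : (0:ℝ) ≤ 1 / ρ ^ 2 := by positivity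
    have h4 : 1 / ρ ^ 2 * (ρ ^ 2 * ‖w k - L (x (k + 1))‖ ^ 2
          + ρ * (μ * ‖x (k + 1) - xstar‖ ^ 2))
        = ‖w k - L (x (k + 1))‖ ^ 2
          + 1 / ρ ^ 2 * (ρ * (μ * ‖x (k + 1) - xstar‖ ^ 2)) := by
      field_simp
      try ring
    rw [h4]
    nlinarith [mul_nonneg h3 h1]
  have hsq2 : Tendsto (fun k => ‖x (k + 1) - xstar‖ ^ 2) atTop (nhds 0) := by
    apply squeeze_zero (fun k => by positivity) (fun k => ?_) (haux (1 / (ρ * μ)))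
    simp only [hee]
    have h1 : (0:ℝ) ≤ ρ ^ 2 * ‖w k - L (x (k + 1))‖ ^ 2 := by positivity
    have h3 : (0:ℝ) ≤ 1 / (ρ * μ) := by positivity
    have h4 : 1 / (ρ * μ) * (ρ ^ 2 * ‖w k - L (x (k + 1))‖ ^ 2
          + ρ * (μ * ‖x (k + 1) - xstar‖ ^ 2))
        = ‖x (k + 1) - xstar‖ ^ 2
          + 1 / (ρ * μ) * (ρ ^ 2 * ‖w k - L (x (k + 1))‖ ^ 2) := by
      field_simp
      try ring
    rw [h4]
    nlinarith [mul_nonneg h3 h1]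
  have hnorm_of_sq : ∀ (g' : ℕ → EuclideanSpace ℝ (Fin n')) (h' : ℕ → EuclideanSpace ℝ (Fin m'))
      , True := fun _ _ => trivial
  have hs0 : Tendsto (fun k => w k - L (x (k + 1))) atTop (nhds 0) := by
    rw [tendsto_zero_iff_norm_tendsto_zero]
    have := hsq1.sqrt
    have heq : (fun k => Real.sqrt (‖w k - L (x (k + 1))‖ ^ 2))
        = fun k => ‖w k - L (x (k + 1))‖ := by
      funext k; exact Real.sqrt_sq (norm_nonneg _)
    rw [heq] at this
    simpa using this
  have hΔ0 : Tendsto (fun k => x (k + 1) - xstar) atTop (nhds 0) := by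
    rw [tendsto_zero_iff_norm_tendsto_zero]
    have := hsq2.sqrt
    have heq : (fun k => Real.sqrt (‖x (k + 1) - xstar‖ ^ 2))
        = fun k => ‖x (k + 1) - xstar‖ := by
      funext k; exact Real.sqrt_sq (norm_nonneg _)
    rw [heq] at this
    simpa using this
  have hx1 : Tendsto (fun k => x (k + 1)) atTop (nhds xstar) := tendsto_sub_nhds_zero_iff.mp hΔ0
  have hxlim : Tendsto x atTop (nhds xstar) := (Filter.tendsto_add_atTop_iff_nat 1).mp hx1
  have hLx1 : Tendsto (fun k => L (x (k + 1))) atTop (nhds wstar) := by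
    have := (hLc.tendsto xstar).comp hx1
    simpa [Function.comp_def, hwstar] using this
  have hwlim : Tendsto w atTop (nhds wstar) := by
    have hsum := hs0.add hLx1
    have heq : (fun k => (w k - L (x (k + 1))) + L (x (k + 1))) = w := by
      funext k; abel
    rw [heq] at hsum
    simpa using hsum
  
  -- boundedness of the multipliers
  have hVmono : ∀ k, V ηstar k ≤ V ηstar 0 := by
    intro k
    induction k with
    | zero => exact le_refl _
    | succ k ih =>
      have h1 := hestep k
      have h2 := henonneg k
      linarith
  have hηbd : ∀ k : ℕ, (fun k => η (k + 1)) k ∈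
      Metric.closedBall ηstar (Real.sqrt (V ηstar 0)) := by
    intro k
    rw [Metric.mem_closedBall, dist_eq_norm]
    rw [Real.le_sqrt (norm_nonneg _) (hVnonneg ηstar 0)]
    have h1 : ‖η (k + 1) - ηstar‖ ^ 2 ≤ V ηstar (k + 1) := by
      simp only [hV]
      nlinarith [sq_nonneg ‖w (k + 1) - wstar‖, sq_nonneg ρ,
        mul_nonneg (sq_nonneg ρ) (sq_nonneg ‖w (k + 1) - wstar‖)]
    have h2 := hVmono (k + 1)
    linarith
  obtain ⟨ηinf, _, φ, hφmono, hφlim0⟩ :=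
    tendsto_subseq_of_bounded Metric.isBounded_closedBall hηbd
  have hφlim : Tendsto (fun i => η (φ i + 1)) atTop (nhds ηinf) := by
    have := hφlim0
    simpa [Function.comp_def] using this
  have hφ1 : Tendsto (fun i => φ i + 1) atTop atTop := by
    have := (tendsto_add_atTop_nat 1).comp hφmono.tendsto_atTop
    simpa [Function.comp_def] using this
  -- cluster point properties
  have hC1 : gf xstar = Lt ηinf := by
    have hxφ : Tendsto (fun i => x (φ i + 1 + 1)) atTop (nhds xstar) := by
      have := hx1.comp hφ1
      simpa [Function.comp_def] using this
    have lhsT : Tendsto (fun i => gf (x (φ i + 1 + 1))) atTop (nhds (gf xstar)) := by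
      have := (hgfc.tendsto xstar).comp hxφ
      simpa [Function.comp_def] using this
    have hsφ : Tendsto (fun i => w (φ i + 1) - L (x (φ i + 1 + 1))) atTop (nhds 0) := by
      have := hs0.comp hφ1
      simpa [Function.comp_def] using this
    have rhsT : Tendsto (fun i => Lt (η (φ i + 1))
        + ρ • Lt (w (φ i + 1) - L (x (φ i + 1 + 1)))) atTop
        (nhds (Lt ηinf + ρ • Lt 0)) := by
      apply Tendsto.add
      · have := (hLtc.tendsto ηinf).comp hφlim
        simpa [Function.comp_def] using this
      · have h1 := (hLtc.tendsto 0).comp hsφ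
        have h2 : Tendsto (fun i => Lt (w (φ i + 1) - L (x (φ i + 1 + 1)))) atTop
            (nhds (Lt 0)) := by simpa only [Function.comp_def] using h1
        exact h2.const_smul ρ
    have heq : (fun i => gf (x (φ i + 1 + 1)))
        = fun i => Lt (η (φ i + 1)) + ρ • Lt (w (φ i + 1) - L (x (φ i + 1 + 1))) := by
      funext i; exact XE (φ i + 1)
    rw [heq] at lhsT
    have := tendsto_nhds_unique lhsT rhsT
    rw [this]
    simp
  have hwφ : Tendsto (fun i => w (φ i + 1)) atTop (nhds wstar) := by
    have := hwlim.comp hφ1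
    simpa [Function.comp_def] using this
  have hC2 : ∀ v, g wstar + ⟪ηinf, wstar⟫ ≤ g v + ⟪ηinf, v⟫ := by
    intro v
    have lhsT : Tendsto (fun i => g (w (φ i + 1)) + ⟪η (φ i + 1), w (φ i + 1)⟫) atTop
        (nhds (g wstar + ⟪ηinf, wstar⟫)) := by
      apply Tendsto.add
      · have := (hgc.tendsto wstar).comp hwφ
        simpa [Function.comp_def] using this
      · exact hφlim.inner hwφ
    have rhsT : Tendsto (fun i => g v + ⟪η (φ i + 1), v⟫) atTop
        (nhds (g v + ⟪ηinf, v⟫)) :=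
      Tendsto.add tendsto_const_nhds (hφlim.inner tendsto_const_nhds)
    exact le_of_tendsto_of_tendsto' lhsT rhsT (fun i => WE (φ i) v)
  -- Fejér monotonicity with respect to the cluster point
  have lyapinf := lyap ηinf hC1 hC2
  have hVinf_anti : Antitone (V ηinf) := antitone_nat_of_succ_le (fun k => by
    have h1 := lyapinf k
    have h2 : (0:ℝ) ≤ ρ ^ 2 * ‖w k - L (x (k + 1))‖ ^ 2 := by positivity
    have h3 : (0:ℝ) ≤ ρ * (μ * ‖x (k + 1) - xstar‖ ^ 2) := by positivity
    linarith)
  have hVφ : Tendsto (fun i => V ηinf (φ i + 1)) atTop (nhds 0) := by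
    have t1 : Tendsto (fun i => ‖η (φ i + 1) - ηinf‖ ^ 2) atTop (nhds 0) := by
      have h0 : Tendsto (fun i => η (φ i + 1) - ηinf) atTop (nhds 0) :=
        tendsto_sub_nhds_zero_iff.mpr hφlim
      have h1 := tendsto_zero_iff_norm_tendsto_zero.mp h0
      have := h1.pow 2
      simpa using this
    have t2 : Tendsto (fun i => ρ ^ 2 * ‖w (φ i + 1) - wstar‖ ^ 2) atTop (nhds 0) := by
      have h0 : Tendsto (fun i => w (φ i + 1) - wstar) atTop (nhds 0) :=
        tendsto_sub_nhds_zero_iff.mpr hwφ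
      have h1 := tendsto_zero_iff_norm_tendsto_zero.mp h0
      have h2 := h1.pow 2
      have := h2.const_mul (ρ ^ 2)
      simpa using this
    have := t1.add t2
    simpa [hV] using this
  have hVbdd : BddBelow (Set.range (V ηinf)) := by
    refine ⟨0, fun y hy => ?_⟩
    obtain ⟨k, rfl⟩ := hy
    exact hVnonneg ηinf k
  have hVconv := tendsto_atTop_ciInf hVinf_anti hVbdd
  have hVsub : Tendsto (fun i => V ηinf (φ i + 1)) atTop (nhds (⨅ k, V ηinf k)) := by
    have := hVconv.comp hφ1
    simpa [Function.comp_def] using this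
  have hiInf0 : (⨅ k, V ηinf k) = 0 := tendsto_nhds_unique hVsub hVφ
  have hVlim : Tendsto (V ηinf) atTop (nhds 0) := by
    rw [← hiInf0]; exact hVconv
  have hηlim : Tendsto η atTop (nhds ηinf) := by
    have h1 : Tendsto (fun k => ‖η k - ηinf‖ ^ 2) atTop (nhds 0) := by
      apply squeeze_zero (fun k => by positivity) (fun k => ?_) hVlim
      simp only [hV]
      nlinarith [mul_nonneg (sq_nonneg ρ) (sq_nonneg ‖w k - wstar‖)]
    have h2 := h1.sqrt
    have heq : (fun k => Real.sqrt (‖η k - ηinf‖ ^ 2)) = fun k => ‖η k - ηinf‖ := by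
      funext k; exact Real.sqrt_sq (norm_nonneg _)
    rw [heq] at h2
    have h3 : Tendsto (fun k => ‖η k - ηinf‖) atTop (nhds 0) := by simpa using h2
    exact tendsto_sub_nhds_zero_iff.mp (tendsto_zero_iff_norm_tendsto_zero.mpr h3)
  exact ⟨xstar, wstar, ηinf, hxlim, hwlim, hηlim, hwstar, hopt⟩

set_option maxHeartbeats 1000000 in
/-- **Convergence of (KS-)ADMM for the L1-regularized linear state-estimation problem.**
With `R`, `Q` symmetric positive definite, `Ψ` invertible and `λ ≥ 0`, any ADMM sequence
for the augmented Lagrangian of `F(x) = ½‖y − Hx‖²_{R⁻¹} + ½‖Ψx − m₀‖²_{Q⁻¹} + λ‖Ωx‖₁`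
converges to a limit `(x⋆, w⋆, η⋆)` with `w⋆ = Ωx⋆` and `x⋆` the unique global minimizer
of `F`. -/
theorem ks_admm_convergence (n p m : ℕ)
    (H : Matrix (Fin p) (Fin n) ℝ) (Ψ : Matrix (Fin n) (Fin n) ℝ)
    (Ω : Matrix (Fin m) (Fin n) ℝ)
    (R : Matrix (Fin p) (Fin p) ℝ) (Q : Matrix (Fin n) (Fin n) ℝ)
    (hR : R.PosDef) (hQ : Q.PosDef) (hΨ : IsUnit Ψ.det)
    (lam ρ : ℝ) (hlam : 0 ≤ lam) (hρ : 0 < ρ)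
    (y : EuclideanSpace ℝ (Fin p)) (m₀ : EuclideanSpace ℝ (Fin n))
    (F : EuclideanSpace ℝ (Fin n) → ℝ)
    (hF : ∀ x, F x =
      1 / 2 * ⟪mv R⁻¹ (y - mv H x), y - mv H x⟫
      + 1 / 2 * ⟪mv Q⁻¹ (mv Ψ x - m₀), mv Ψ x - m₀⟫
      + lam * ∑ j, |mv Ω x j|)
    (Lag : EuclideanSpace ℝ (Fin n) → EuclideanSpace ℝ (Fin m) →
      EuclideanSpace ℝ (Fin m) → ℝ)
    (hLag : ∀ x w η, Lag x w η =
      1 / 2 * ⟪mv R⁻¹ (y - mv H x), y - mv H x⟫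
      + 1 / 2 * ⟪mv Q⁻¹ (mv Ψ x - m₀), mv Ψ x - m₀⟫
      + lam * ∑ j, |w j|
      + ⟪η, w - mv Ω x⟫
      + ρ / 2 * ‖w - mv Ω x‖ ^ 2)
    (x : ℕ → EuclideanSpace ℝ (Fin n))
    (w η : ℕ → EuclideanSpace ℝ (Fin m))
    (hx : ∀ k, ∀ z, Lag (x (k + 1)) (w k) (η k) ≤ Lag z (w k) (η k))
    (hw : ∀ k, ∀ v, Lag (x (k + 1)) (w (k + 1)) (η k) ≤ Lag (x (k + 1)) v (η k))
    (hη : ∀ k, η (k + 1) = η k + ρ • (w (k + 1) - mv Ω (x (k + 1)))) :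
    ∃ (xs : EuclideanSpace ℝ (Fin n)) (ws ηs : EuclideanSpace ℝ (Fin m)),
      Filter.Tendsto x Filter.atTop (nhds xs) ∧
      Filter.Tendsto w Filter.atTop (nhds ws) ∧
      Filter.Tendsto η Filter.atTop (nhds ηs) ∧
      ws = mv Ω xs ∧
      (∀ z, F xs ≤ F z) ∧ (∀ z, z ≠ xs → F xs < F z) := by
  have hRsym : R⁻¹ᵀ = R⁻¹ := by
    rw [← Matrix.conjTranspose_eq_transpose_of_trivial]
    exact hR.1.inv
  have hQsym : Q⁻¹ᵀ = Q⁻¹ := by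
    rw [← Matrix.conjTranspose_eq_transpose_of_trivial]
    exact hQ.1.inv
  have hALapp : ∀ d, Matrix.toEuclideanLin ((Hᵀ * R⁻¹) * H + (Ψᵀ * Q⁻¹) * Ψ) d
      = mv ((Hᵀ * R⁻¹) * H) d + mv ((Ψᵀ * Q⁻¹) * Ψ) d := by
    intro d
    rw [_root_.map_add]
    rfl
  have hquadH : ∀ v : EuclideanSpace ℝ (Fin n),
      ⟪mv ((Hᵀ * R⁻¹) * H) v, v⟫ = ⟪mv R⁻¹ (mv H v), mv H v⟫ := by
    intro v
    rw [mv_mul, mv_mul, mv_adjoint Hᵀ (mv R⁻¹ (mv H v)) v, Matrix.transpose_transpose]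
  have hquadΨ : ∀ v : EuclideanSpace ℝ (Fin n),
      ⟪mv ((Ψᵀ * Q⁻¹) * Ψ) v, v⟫ = ⟪mv Q⁻¹ (mv Ψ v), mv Ψ v⟫ := by
    intro v
    rw [mv_mul, mv_mul, mv_adjoint Ψᵀ (mv Q⁻¹ (mv Ψ v)) v, Matrix.transpose_transpose]
  have hALpos : ∀ v : EuclideanSpace ℝ (Fin n), v ≠ 0 →
      0 < ⟪Matrix.toEuclideanLin ((Hᵀ * R⁻¹) * H + (Ψᵀ * Q⁻¹) * Ψ) v, v⟫ := by
    intro v hv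
    rw [hALapp, inner_add_left, hquadH, hquadΨ]
    have hH := mv_inner_nonneg hR.inv (mv H v)
    have hΨv : mv Ψ v ≠ 0 := by
      intro h0
      apply hv
      have hinv : mv Ψ⁻¹ (mv Ψ v) = v := by
        rw [← mv_mul, Matrix.nonsing_inv_mul Ψ hΨ, mv_one]
      rw [h0] at hinv
      rw [← hinv, mv]
      simp
    have hQv := mv_inner_pos hQ.inv (mv Ψ v) hΨv
    linarith
  obtain ⟨μ, hμ, hAbound⟩ := ksadmm_exists_mu n
    (Matrix.toEuclideanLin ((Hᵀ * R⁻¹) * H + (Ψᵀ * Q⁻¹) * Ψ)) hALpos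
  -- verification of the quadratic expansion hypotheses
  have hfexp : ∀ z d : EuclideanSpace ℝ (Fin n),
      (1 / 2 * ⟪mv R⁻¹ (y - mv H (z + d)), y - mv H (z + d)⟫
        + 1 / 2 * ⟪mv Q⁻¹ (mv Ψ (z + d) - m₀), mv Ψ (z + d) - m₀⟫)
      = (1 / 2 * ⟪mv R⁻¹ (y - mv H z), y - mv H z⟫
        + 1 / 2 * ⟪mv Q⁻¹ (mv Ψ z - m₀), mv Ψ z - m₀⟫)
        + ⟪mv Hᵀ (mv R⁻¹ (mv H z - y)) + mv Ψᵀ (mv Q⁻¹ (mv Ψ z - m₀)), d⟫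
        + 1 / 2 * ⟪Matrix.toEuclideanLin ((Hᵀ * R⁻¹) * H + (Ψᵀ * Q⁻¹) * Ψ) d, d⟫ := by
    intro z d
    rw [ksadmm_inner_flip R⁻¹ H y (z + d), ksadmm_inner_flip R⁻¹ H y z]
    rw [ksadmm_quad_expand R⁻¹ hRsym H y z d, ksadmm_quad_expand Q⁻¹ hQsym Ψ m₀ z d]
    rw [hALapp, inner_add_left, inner_add_left]
    ring
  have hgfexp : ∀ z d : EuclideanSpace ℝ (Fin n),
      (mv Hᵀ (mv R⁻¹ (mv H (z + d) - y)) + mv Ψᵀ (mv Q⁻¹ (mv Ψ (z + d) - m₀)))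
      = (mv Hᵀ (mv R⁻¹ (mv H z - y)) + mv Ψᵀ (mv Q⁻¹ (mv Ψ z - m₀)))
        + Matrix.toEuclideanLin ((Hᵀ * R⁻¹) * H + (Ψᵀ * Q⁻¹) * Ψ) d := by
    intro z d
    rw [ksadmm_grad_expand R⁻¹ H y z d, ksadmm_grad_expand Q⁻¹ Ψ m₀ z d, hALapp]
    abel
  have hLagc : ∀ xx ww ηη, Lag xx ww ηη =
      (1 / 2 * ⟪mv R⁻¹ (y - mv H xx), y - mv H xx⟫
        + 1 / 2 * ⟪mv Q⁻¹ (mv Ψ xx - m₀), mv Ψ xx - m₀⟫)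
      + (lam * ∑ j, |ww j|) + ⟪ηη, ww - mv Ω xx⟫
      + ρ / 2 * ‖ww - mv Ω xx‖ ^ 2 := by
    intro xx ww ηη
    rw [hLag]
    try ring
  obtain ⟨xs, ws, ηs, hxl, hwl, hηl, hwsl, hmin⟩ :=
    ksadmm_core n m
      (fun z => 1 / 2 * ⟪mv R⁻¹ (y - mv H z), y - mv H z⟫
        + 1 / 2 * ⟪mv Q⁻¹ (mv Ψ z - m₀), mv Ψ z - m₀⟫)
      (fun z => mv Hᵀ (mv R⁻¹ (mv H z - y)) + mv Ψᵀ (mv Q⁻¹ (mv Ψ z - m₀)))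
      (Matrix.toEuclideanLin ((Hᵀ * R⁻¹) * H + (Ψᵀ * Q⁻¹) * Ψ))
      μ hμ hAbound hfexp hgfexp
      (Matrix.toEuclideanLin Ω) (Matrix.toEuclideanLin Ωᵀ)
      (fun u v => mv_adjoint Ω u v)
      lam hlam (fun v => lam * ∑ j, |v j|) (fun _ => rfl) ρ hρ
      Lag hLagc x w η hx hw hη
  refine ⟨xs, ws, ηs, hxl, hwl, hηl, hwsl, ?_, ?_⟩
  · intro z
    have h1 : (1 / 2 * ⟪mv R⁻¹ (y - mv H xs), y - mv H xs⟫
          + 1 / 2 * ⟪mv Q⁻¹ (mv Ψ xs - m₀), mv Ψ xs - m₀⟫)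
        + (lam * ∑ j, |mv Ω xs j|) + μ / 2 * ‖z - xs‖ ^ 2
        ≤ (1 / 2 * ⟪mv R⁻¹ (y - mv H z), y - mv H z⟫
          + 1 / 2 * ⟪mv Q⁻¹ (mv Ψ z - m₀), mv Ψ z - m₀⟫)
        + (lam * ∑ j, |mv Ω z j|) := hmin z
    rw [hF z, hF xs]
    have hsq : 0 ≤ μ / 2 * ‖z - xs‖ ^ 2 := by positivity
    linarith
  · intro z hz
    have h1 : (1 / 2 * ⟪mv R⁻¹ (y - mv H xs), y - mv H xs⟫
          + 1 / 2 * ⟪mv Q⁻¹ (mv Ψ xs - m₀), mv Ψ xs - m₀⟫)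
        + (lam * ∑ j, |mv Ω xs j|) + μ / 2 * ‖z - xs‖ ^ 2
        ≤ (1 / 2 * ⟪mv R⁻¹ (y - mv H z), y - mv H z⟫
          + 1 / 2 * ⟪mv Q⁻¹ (mv Ψ z - m₀), mv Ψ z - m₀⟫)
        + (lam * ∑ j, |mv Ω z j|) := hmin z
    rw [hF z, hF xs]
    have hne : z - xs ≠ 0 := sub_ne_zero.mpr hz
    have hn : 0 < ‖z - xs‖ := norm_pos_iff.mpr hne
    have hsq : 0 < μ / 2 * ‖z - xs‖ ^ 2 := by positivity
    linarith
end

section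
/- Let Ω be a real m×n matrix, ρ > 0, θ₁ : ℝⁿ → ℝ differentiable with L-Lipschitz gradient, θ₂ : ℝᵐ → ℝ convex, and define the augmented Lagrangian L(x,w;η) = θ₁(x) + θ₂(w) + ⟨η, w − Ωx⟩ + (ρ/2)‖w − Ωx‖². Assume ΩᵀΩ ⪰ κ²I for some κ > 0. Suppose (x, w, η) and (x⁺, w⁺, η⁺) satisfy: x⁺ is a stationary point of x ↦ L(x, w; η) (i.e. its gradient at x⁺ is zero), w⁺ globally minimizes w ↦ L(x⁺, w; η), and η⁺ = η + ρ(w⁺ − Ωx⁺). Then L(x⁺, w⁺; η⁺) − L(x, w; η) ≤ ((L − ρκ²)/2)·‖x⁺ − x‖² + (1/ρ)·‖η⁺ − η‖². -/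
open scoped RealInnerProductSpace

lemma descent_lower {N : ℕ} (f : EuclideanSpace ℝ (Fin N) → ℝ) (L : ℝ)
    (hf : Differentiable ℝ f)
    (hLip : ∀ u v, ‖gradient f u - gradient f v‖ ≤ L * ‖u - v‖)
    (a b : EuclideanSpace ℝ (Fin N)) :
    f a + ⟪gradient f a, b - a⟫ - L / 2 * ‖b - a‖ ^ 2 ≤ f b := by
  set d := b - a with hd
  have hfd : ∀ y (z : EuclideanSpace ℝ (Fin N)), fderiv ℝ f y z = ⟪gradient f y, z⟫ := by
    intro y z
    rw [((hf y).hasGradientAt).hasFDerivAt.fderiv]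
    simp [InnerProductSpace.toDual]
  have hc : ∀ t : ℝ, HasDerivAt (fun t : ℝ => a + t • d) d t := by
    intro t
    simpa using ((hasDerivAt_id t).smul_const d).const_add a
  have hφ : ∀ t : ℝ, HasDerivAt (fun t : ℝ => f (a + t • d))
      ⟪gradient f (a + t • d), d⟫ t := by
    intro t
    have := ((hf (a + t • d)).hasFDerivAt).comp_hasDerivAt t (hc t)
    rw [hfd] at this; exact this
  have hcontg : Continuous (gradient f) := by
    have : LipschitzWith (Real.toNNReal L) (gradient f) := by
      apply LipschitzWith.of_dist_le_mul
      intro u v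
      rw [dist_eq_norm, dist_eq_norm]
      exact (hLip u v).trans
        (mul_le_mul_of_nonneg_right (Real.le_coe_toNNReal L) (norm_nonneg _))
    exact this.continuous
  have hcontφ' : Continuous (fun t : ℝ => ⟪gradient f (a + t • d), d⟫) := by
    apply Continuous.inner
    · exact hcontg.comp (by continuity)
    · exact continuous_const
  have hint : ∫ t in (0:ℝ)..1, ⟪gradient f (a + t • d), d⟫ = f b - f a := by
    have := intervalIntegral.integral_eq_sub_of_hasDerivAt (f := fun t : ℝ => f (a + t • d))
      (fun t _ => hφ t) (hcontφ'.intervalIntegrable 0 1)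
    simpa [hd] using this
  have hbnd : ∀ t ∈ Set.Icc (0:ℝ) 1,
      -(L * t * ‖d‖ ^ 2) ≤ ⟪gradient f (a + t • d), d⟫ - ⟪gradient f a, d⟫ := by
    intro t ht
    have h1 : |⟪gradient f (a + t • d) - gradient f a, d⟫| ≤
        ‖gradient f (a + t • d) - gradient f a‖ * ‖d‖ := abs_real_inner_le_norm _ _
    have h2 : ‖gradient f (a + t • d) - gradient f a‖ ≤ L * (t * ‖d‖) := by
      have := hLip (a + t • d) a
      simpa [norm_smul, abs_of_nonneg ht.1] using this
    have h3 : ‖gradient f (a + t • d) - gradient f a‖ * ‖d‖ ≤ L * (t * ‖d‖) * ‖d‖ :=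
      mul_le_mul_of_nonneg_right h2 (norm_nonneg _)
    have h4 : ⟪gradient f (a + t • d) - gradient f a, d⟫ =
        ⟪gradient f (a + t • d), d⟫ - ⟪gradient f a, d⟫ := inner_sub_left _ _ _
    rw [h4] at h1
    have h5 : L * (t * ‖d‖) * ‖d‖ = L * t * ‖d‖ ^ 2 := by ring
    have h6 := neg_abs_le (⟪gradient f (a + t • d), d⟫ - ⟪gradient f a, d⟫)
    linarith
  have hintge : -(L / 2 * ‖d‖ ^ 2) ≤
      ∫ t in (0:ℝ)..1, (⟪gradient f (a + t • d), d⟫ - ⟪gradient f a, d⟫) := by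
    have hmono := intervalIntegral.integral_mono_on (μ := MeasureTheory.volume) (a := (0:ℝ)) (b := 1) zero_le_one
      (f := fun t => -(L * t * ‖d‖ ^ 2))
      (g := fun t => ⟪gradient f (a + t • d), d⟫ - ⟪gradient f a, d⟫)
      ((((continuous_const.mul continuous_id).mul continuous_const).neg :
        Continuous fun t : ℝ => -(L * t * ‖d‖ ^ 2)).intervalIntegrable 0 1)
      ((hcontφ'.sub continuous_const).intervalIntegrable 0 1)
      hbnd
    have hval : ∫ t in (0:ℝ)..1, -(L * t * ‖d‖ ^ 2) = -(L / 2 * ‖d‖ ^ 2) := by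
      have : ∀ t : ℝ, -(L * t * ‖d‖ ^ 2) = (-(L * ‖d‖ ^ 2)) * t := fun t => by ring
      simp only [this]
      rw [intervalIntegral.integral_const_mul, integral_id]
      ring
    linarith [hmono, hval.symm ▸ hmono]
  have hsub : ∫ t in (0:ℝ)..1, (⟪gradient f (a + t • d), d⟫ - ⟪gradient f a, d⟫)
      = (f b - f a) - ⟪gradient f a, d⟫ := by
    rw [intervalIntegral.integral_sub (hcontφ'.intervalIntegrable 0 1)
      (intervalIntegrable_const (c := ⟪gradient f a, d⟫)), hint]
    simp
  rw [hsub] at hintge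
  linarith

lemma mv_inner_transpose_mul_self {m n : ℕ} (Ω : Matrix (Fin m) (Fin n) ℝ)
    (v : EuclideanSpace ℝ (Fin n)) :
    ⟪mv (Ω.transpose * Ω) v, v⟫ = ‖mv Ω v‖ ^ 2 := by
  rw [← real_inner_self_eq_norm_sq]
  show ⟪Matrix.toEuclideanLin (Ω.transpose * Ω) v, v⟫ = _
  simp only [Matrix.toEuclideanLin_apply, PiLp.inner_apply, RCLike.inner_apply, conj_trivial]
  have : ∀ (k : ℕ) (a b : Fin k → ℝ), ∑ x : Fin k, a x * b x = dotProduct a b :=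
    fun _ _ _ => rfl
  rw [this, this, ← Matrix.mulVec_mulVec, Matrix.mulVec_transpose, dotProduct_comm, ← Matrix.dotProduct_mulVec]
  rfl

/-- **Per-iteration inequality (q_case_b) for ADMM with `Ω` of full column rank.**
If `θ₁` has `L`-Lipschitz gradient, `θ₂` is convex, `ΩᵀΩ ⪰ κ²I`, `x⁺` is a stationary
point of the `x`-subproblem, `w⁺` minimizes the `w`-subproblem and
`η⁺ = η + ρ(w⁺ − Ωx⁺)`, then
`L(x⁺,w⁺;η⁺) − L(x,w;η) ≤ ((L − ρκ²)/2)‖x⁺ − x‖² + (1/ρ)‖η⁺ − η‖²`. -/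
theorem admm_one_step_inequality_column_rank (n m : ℕ)
    (Ω : Matrix (Fin m) (Fin n) ℝ) (ρ L κ : ℝ)
    (hρ : 0 < ρ) (hκ : 0 < κ)
    (θ₁ : EuclideanSpace ℝ (Fin n) → ℝ) (θ₂ : EuclideanSpace ℝ (Fin m) → ℝ)
    (hθ₁ : Differentiable ℝ θ₁)
    (hLip : ∀ u v, ‖gradient θ₁ u - gradient θ₁ v‖ ≤ L * ‖u - v‖)
    (hθ₂ : ConvexOn ℝ Set.univ θ₂)
    (Lag : EuclideanSpace ℝ (Fin n) → EuclideanSpace ℝ (Fin m) →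
      EuclideanSpace ℝ (Fin m) → ℝ)
    (hLag : ∀ x w η, Lag x w η =
      θ₁ x + θ₂ w + ⟪η, w - mv Ω x⟫ + ρ / 2 * ‖w - mv Ω x‖ ^ 2)
    (hΩ : ∀ v : EuclideanSpace ℝ (Fin n),
      κ ^ 2 * ‖v‖ ^ 2 ≤ ⟪mv (Ω.transpose * Ω) v, v⟫)
    (x xp : EuclideanSpace ℝ (Fin n)) (w wp η ηp : EuclideanSpace ℝ (Fin m))
    (hxp : gradient (fun z => Lag z w η) xp = 0)
    (hwp : ∀ v, Lag xp wp η ≤ Lag xp v η)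
    (hηp : ηp = η + ρ • (wp - mv Ω xp)) :
    Lag xp wp ηp - Lag x w η ≤
      (L - ρ * κ ^ 2) / 2 * ‖xp - x‖ ^ 2 + 1 / ρ * ‖ηp - η‖ ^ 2 := by
  classical
  set A : EuclideanSpace ℝ (Fin n) →L[ℝ] EuclideanSpace ℝ (Fin m) :=
    LinearMap.toContinuousLinearMap (Matrix.toEuclideanLin Ω) with hAdef
  have hA : ∀ z, mv Ω z = A z := fun z => rfl
  set g : EuclideanSpace ℝ (Fin n) → ℝ :=
    fun z => θ₂ w + ⟪η, w - mv Ω z⟫ + ρ / 2 * ‖w - mv Ω z‖ ^ 2 with hgdef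
  have hLg : ∀ z, Lag z w η = θ₁ z + g z := by
    intro z; rw [hLag, hgdef]; ring
  set u : EuclideanSpace ℝ (Fin n) :=
    -(ContinuousLinearMap.adjoint A (η + ρ • (w - mv Ω xp))) with hudef
  have hgap : ∀ z, g z = θ₂ w + ⟪η, w - mv Ω z⟫ + ρ / 2 * ‖w - mv Ω z‖ ^ 2 := fun z => rfl
  -- quadratic expansion of g around xp
  have hexp : ∀ y, g y - g xp = ⟪u, y - xp⟫ + ρ / 2 * ‖A (y - xp)‖ ^ 2 := by
    intro y
    have hsplit : w - mv Ω y = (w - mv Ω xp) - A (y - xp) := by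
      rw [hA, hA, map_sub]; abel
    have h1 : ⟪η, (w - mv Ω xp) - A (y - xp)⟫ = ⟪η, w - mv Ω xp⟫ - ⟪η, A (y - xp)⟫ :=
      inner_sub_right _ _ _
    have h2 : ‖(w - mv Ω xp) - A (y - xp)‖ ^ 2
        = ‖w - mv Ω xp‖ ^ 2 - 2 * ⟪w - mv Ω xp, A (y - xp)⟫ + ‖A (y - xp)‖ ^ 2 :=
      norm_sub_sq_real _ _
    have h3 : ⟪u, y - xp⟫ = -(⟪η, A (y - xp)⟫ + ρ * ⟪w - mv Ω xp, A (y - xp)⟫) := by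
      rw [hudef, inner_neg_left, ContinuousLinearMap.adjoint_inner_left,
        inner_add_left, real_inner_smul_left]
    rw [hgap y, hgap xp, hsplit, h1, h2, h3]
    ring
  -- g has gradient u at xp
  have hg : HasGradientAt g u xp := by
    rw [hasGradientAt_iff_isLittleO]
    have heq : (fun y => g y - g xp - ⟪u, y - xp⟫)
        = fun y => ρ / 2 * ‖A (y - xp)‖ ^ 2 := by
      funext y; have := hexp y; linarith
    rw [heq]
    have hbig : (fun y => ρ / 2 * ‖A (y - xp)‖ ^ 2) =O[nhds xp]
        (fun y => ‖y - xp‖ ^ 2) := by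
      rw [Asymptotics.isBigO_iff]
      refine ⟨ρ / 2 * ‖A‖ ^ 2, Filter.Eventually.of_forall fun y => ?_⟩
      have h1 : ‖A (y - xp)‖ ≤ ‖A‖ * ‖y - xp‖ := A.le_opNorm _
      have h2 : ‖A (y - xp)‖ ^ 2 ≤ ‖A‖ ^ 2 * ‖y - xp‖ ^ 2 := by
        rw [← mul_pow]; exact pow_le_pow_left₀ (norm_nonneg _) h1 2
      rw [Real.norm_eq_abs, Real.norm_eq_abs, abs_of_nonneg (by positivity),
        abs_of_nonneg (by positivity)]
      nlinarith
    have hlo : (fun y : EuclideanSpace ℝ (Fin n) => ‖y - xp‖ ^ 2) =o[nhds xp]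
        (fun y => y - xp) := by
      rw [Asymptotics.isLittleO_iff]
      intro c hc
      filter_upwards [Metric.ball_mem_nhds xp hc] with y hy
      rw [Metric.mem_ball, dist_eq_norm] at hy
      rw [Real.norm_eq_abs, abs_of_nonneg (by positivity), pow_two]
      exact mul_le_mul_of_nonneg_right hy.le (norm_nonneg _)
    exact hbig.trans_isLittleO hlo
  -- gradient of Lag(·, w, η) at xp
  have hsum : HasGradientAt (fun z => Lag z w η) (gradient θ₁ xp + u) xp := by
    have h1 := ((hθ₁ xp).hasGradientAt).hasFDerivAt
    have h2 := hg.hasFDerivAt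
    have h3 := h1.add h2
    have heq : (θ₁ + g) = fun z => Lag z w η := funext fun z => (hLg z).symm
    rw [heq] at h3
    rw [hasGradientAt_iff_hasFDerivAt, map_add]
    exact h3
  have hgradzero : gradient θ₁ xp = -u := by
    have := hsum.gradient
    rw [hxp] at this
    exact eq_neg_of_add_eq_zero_left this.symm
  -- Term 3: x-update decrease
  have hdesc := descent_lower θ₁ L hθ₁ hLip xp x
  have hinner : ⟪gradient θ₁ xp, x - xp⟫ = -⟪u, x - xp⟫ := by
    rw [hgradzero, inner_neg_left]
  have hAx : κ ^ 2 * ‖x - xp‖ ^ 2 ≤ ‖A (x - xp)‖ ^ 2 := by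
    have := hΩ (x - xp)
    rwa [mv_inner_transpose_mul_self, hA] at this
  have hterm3 : Lag xp w η - Lag x w η ≤ (L - ρ * κ ^ 2) / 2 * ‖xp - x‖ ^ 2 := by
    have hge := hexp x
    have hn : ‖xp - x‖ = ‖x - xp‖ := norm_sub_rev _ _
    rw [hLg xp, hLg x]
    rw [hinner] at hdesc
    rw [hn]
    have hAx2 := mul_le_mul_of_nonneg_left hAx (le_of_lt (half_pos hρ))
    linarith [hge, hdesc, hAx2]
  -- Term 1: dual update
  have hterm1 : Lag xp wp ηp - Lag xp wp η = 1 / ρ * ‖ηp - η‖ ^ 2 := by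
    set b := wp - mv Ω xp with hb
    have hδ : ηp - η = ρ • b := by rw [hηp]; abel
    have h1 : Lag xp wp ηp - Lag xp wp η = ⟪ηp - η, b⟫ := by
      rw [hLag, hLag, ← hb, inner_sub_left]; ring
    rw [h1, hδ, real_inner_smul_left, real_inner_self_eq_norm_sq, norm_smul,
      Real.norm_eq_abs, abs_of_pos hρ, mul_pow]
    field_simp
  have hterm2 : Lag xp wp η ≤ Lag xp w η := hwp w
  linarith
end
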